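/- arXiv:1705.02838 — 4 statements merged into one kernel-verified Lean document; each statement's English description precedes it below -/
import Mathlib

section
/- Let H be a self-adjoint operator on a finite-dimensional Hilbert space with spectral decomposition H = ∑ λ P_λ, and let P be the spectral projection onto a subset Σ¹ of the spectrum such that dist(Σ¹, σ(H)\Σ¹) ≥ γ > 0. If an operator A is block off-diagonal, i.e. A = P A (1-P) + (1-P) A P, and W : ℝ → ℂ is integrable with Fourier transform Ŵ(ξ) = -i/(√(2π) ξ) for |ξ| ≥ γ, then A = -i [H, I(A)] where I(A) = ∫ W(t) e^{itH} A e^{-itH} dt. -/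
open MeasureTheory Complex

/-!
Write `H = ∑ λᵢ Eᵢ` and split `A` into the blocks `Eᵢ A Eⱼ`. The Heisenberg evolution multiplies
the block `(i, j)` by `e^{it(λᵢ - λⱼ)}`, so `I(A)` multiplies it by `∫ W(t) e^{it(λᵢ - λⱼ)} dt`,
which is `√(2π) Ŵ(λⱼ - λᵢ) = i / (λᵢ - λⱼ)` whenever `|λᵢ - λⱼ| ≥ γ`; the commutator with `H`
multiplies it by `λᵢ - λⱼ`. Hence `-i [H, I(A)]` is the identity on every block joining `Σ¹` to its
complement, and these are the only blocks of an off-diagonal `A`.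
-/

lemma sum_smul_mul_mul_sum_smul {R A ι : Type*} [CommSemiring R] [Semiring A] [Algebra R A]
    [Fintype ι] (c d : ι → R) (E : ι → A) (X : A) :
    (∑ i, c i • E i) * X * (∑ j, d j • E j)
      = ∑ p : ι × ι, (c p.1 * d p.2) • (E p.1 * X * E p.2) := by
  rw [Finset.sum_mul, Finset.sum_mul_sum, Fintype.sum_prod_type]
  simp [smul_smul, mul_assoc, mul_comm (d _)]

namespace CompleteOrthogonalIdempotents

section Algebra

variable {R A ι : Type*} [CommRing R] [Ring A] [Algebra R A] [Fintype ι] {E : ι → A}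

lemma sum_blocks (hE : CompleteOrthogonalIdempotents E) (X : A) :
    ∑ p : ι × ι, E p.1 * X * E p.2 = X := by
  simpa [hE.complete] using (sum_smul_mul_mul_sum_smul (fun _ => (1 : ℕ)) (fun _ => 1) E X).symm

variable [DecidableEq ι]

def piAlgHom (hE : CompleteOrthogonalIdempotents E) : (ι → R) →ₐ[R] A where
  toFun c := ∑ i, c i • E i
  map_one' := by simpa using hE.complete
  map_mul' c d := by
    simp only [Pi.mul_apply, Finset.sum_mul, Finset.mul_sum, smul_mul_smul_comm, hE.mul_eq]
    simp
  map_zero' := by simp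
  map_add' c d := by simp [add_smul, Finset.sum_add_distrib]
  commutes' r := by simp [Algebra.algebraMap_eq_smul_one, ← Finset.smul_sum, hE.complete]

lemma commutator_sum_smul_block (hE : CompleteOrthogonalIdempotents E)
    (c : ι → R) (X : A) (i j : ι) :
    (∑ l, c l • E l) * (E i * X * E j) - (E i * X * E j) * (∑ l, c l • E l)
      = (c i - c j) • (E i * X * E j) := by
  have hleft : (∑ l, c l • E l) * E i = c i • E i := by simp [Finset.sum_mul, hE.mul_eq]
  have hright : E j * ∑ l, c l • E l = c j • E j := by simp [Finset.mul_sum, hE.mul_eq]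
  rw [← mul_assoc, ← mul_assoc, hleft, mul_assoc (E i * X), hright]
  simp only [smul_mul_assoc, mul_smul_comm, sub_smul]

lemma commutator_sum_smul_blocks (hE : CompleteOrthogonalIdempotents E) (c : ι → R)
    (d : ι × ι → R) (X : A) :
    (∑ l, c l • E l) * (∑ p, d p • (E p.1 * X * E p.2))
        - (∑ p, d p • (E p.1 * X * E p.2)) * (∑ l, c l • E l)
      = ∑ p, (d p * (c p.1 - c p.2)) • (E p.1 * X * E p.2) := by
  rw [Finset.mul_sum, Finset.sum_mul, ← Finset.sum_sub_distrib]
  refine Finset.sum_congr rfl fun p _ => ?_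
  rw [mul_smul_comm, smul_mul_assoc, ← smul_sub,
    hE.commutator_sum_smul_block, smul_smul]

lemma block_eq_zero_of_mem_iff_mem (hE : CompleteOrthogonalIdempotents E) {S : Finset ι} {X : A}
    (hX : X = (∑ i ∈ S, E i) * X * (1 - ∑ i ∈ S, E i) + (1 - ∑ i ∈ S, E i) * X * ∑ i ∈ S, E i)
    {i j : ι} (hij : i ∈ S ↔ j ∈ S) : E i * X * E j = 0 := by
  have hleft : E i * ∑ l ∈ S, E l = if i ∈ S then E i else 0 := by
    simp [Finset.mul_sum, hE.mul_eq]
  have hright : (∑ l ∈ S, E l) * E j = if j ∈ S then E j else 0 := by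
    simp [Finset.sum_mul, hE.mul_eq]
  rw [hX]
  simp only [mul_add, add_mul, mul_sub, sub_mul, mul_one, one_mul, ← mul_assoc, hleft]
  simp only [mul_assoc, hright]
  rcases em (i ∈ S) with hi | hi
  · simp [hi, hij.mp hi]
  · simp [hi, mt hij.mpr hi]

end Algebra

section Exp

variable {V ι : Type*} [NormedRing V] [NormedAlgebra ℂ V] [Fintype ι] [DecidableEq ι]
  {E : ι → V}

lemma exp_sum_smul (hE : CompleteOrthogonalIdempotents E) (c : ι → ℂ) :
    NormedSpace.exp (∑ i, c i • E i) = ∑ i, Complex.exp (c i) • E i := by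
  have hcont : Continuous (hE.piAlgHom (R := ℂ)) :=
    LinearMap.continuous_of_finiteDimensional (hE.piAlgHom (R := ℂ)).toLinearMap
  have := NormedSpace.map_exp_of_mem_ball (𝕂 := ℂ) _ hcont c
    (by simp [NormedSpace.expSeries_radius_eq_top])
  simpa [Pi.exp_def, piAlgHom, Complex.exp_eq_exp_ℂ] using this.symm

lemma exp_smul_mul_mul_exp_neg_smul (hE : CompleteOrthogonalIdempotents E) (c : ι → ℂ) (z : ℂ)
    (X : V) :
    NormedSpace.exp (z • ∑ i, c i • E i) * X * NormedSpace.exp (-z • ∑ i, c i • E i)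
      = ∑ p : ι × ι, Complex.exp (z * (c p.1 - c p.2)) • (E p.1 * X * E p.2) := by
  simp_rw [Finset.smul_sum, smul_smul, hE.exp_sum_smul, sum_smul_mul_mul_sum_smul,
    ← Complex.exp_add]
  ring_nf

end Exp

end CompleteOrthogonalIdempotents

lemma MeasureTheory.Integrable.mul_exp_I_mul {W : ℝ → ℂ} (hW : Integrable W) (r : ℝ) :
    Integrable (fun t : ℝ => W t * Complex.exp (I * t * r)) := by
  refine hW.mul_bdd (c := 1) (by fun_prop) (Filter.Eventually.of_forall fun t => ?_)
  rw [show I * (t : ℂ) * r = ((t * r : ℝ) : ℂ) * I by push_cast; ring,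
    Complex.norm_exp_ofReal_mul_I]

lemma integral_smul_sum_exp_smul {V κ : Type*} [NormedAddCommGroup V] [NormedSpace ℂ V]
    [CompleteSpace V] {W : ℝ → ℂ} (hW : Integrable W) (s : Finset κ) (r : κ → ℝ) (B : κ → V) :
    ∫ t : ℝ, W t • ∑ p ∈ s, Complex.exp (I * t * r p) • B p
      = ∑ p ∈ s, (∫ t : ℝ, W t * Complex.exp (I * t * r p)) • B p := by
  simp_rw [Finset.smul_sum, smul_smul]
  rw [integral_finsetSum _ fun p _ => (hW.mul_exp_I_mul (r p)).smul_const (B p)]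
  simp_rw [integral_smul_const]

lemma integral_mul_exp_I_mul_mul_eq_I {W : ℝ → ℂ} {r : ℝ} (hr : r ≠ 0)
    (hW : (1 / (Real.sqrt (2 * Real.pi) : ℂ)) * (∫ t : ℝ, Complex.exp (-(I * ↑(-r) * t)) * W t)
      = -I / ((Real.sqrt (2 * Real.pi) : ℂ) * ↑(-r))) :
    (∫ t : ℝ, W t * Complex.exp (I * t * r)) * r = I := by
  have hs : (Real.sqrt (2 * Real.pi) : ℂ) ≠ 0 := by
    exact_mod_cast (Real.sqrt_pos.mpr (by positivity)).ne'
  have hr' : (r : ℂ) ≠ 0 := by exact_mod_cast hr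
  have hintegrand : ∀ t : ℝ,
      Complex.exp (-(I * ↑(-r) * t)) * W t = W t * Complex.exp (I * t * r) := by
    intro t
    push_cast
    ring_nf
  simp_rw [hintegrand] at hW
  field_simp at hW
  rw [hW, Complex.ofReal_neg, div_neg, neg_neg, div_mul_cancel₀ _ hr']

theorem offdiagonal_inversion_general (n k : ℕ)
    (H P A : EuclideanSpace ℂ (Fin n) →L[ℂ] EuclideanSpace ℂ (Fin n))
    (γ : ℝ) (hγ : 0 < γ)
    (lam : Fin k → ℝ)
    (E : Fin k → (EuclideanSpace ℂ (Fin n) →L[ℂ] EuclideanSpace ℂ (Fin n)))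
    (hEproj : ∀ i, E i * E i = E i)
    (hEorth : ∀ i j, i ≠ j → E i * E j = 0)
    (hEsum : ∑ i, E i = 1)
    (hH : H = ∑ i, (lam i : ℂ) • E i)
    (S : Finset (Fin k)) (hP : P = ∑ i ∈ S, E i)
    (hgap : ∀ i ∈ S, ∀ j ∉ S, γ ≤ |lam i - lam j|)
    (W : ℝ → ℂ) (hWint : Integrable W)
    (hW : ∀ ξ : ℝ, γ ≤ |ξ| →
      (1 / (Real.sqrt (2 * Real.pi) : ℂ)) *
          (∫ t : ℝ, Complex.exp (-(Complex.I * ξ * t)) * W t)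
        = -Complex.I / ((Real.sqrt (2 * Real.pi) : ℂ) * ξ))
    (hA : A = P * A * (1 - P) + (1 - P) * A * P) :
    A = -Complex.I •
      (H * (∫ t : ℝ, W t • (NormedSpace.exp ((Complex.I * t) • H) * A *
              NormedSpace.exp (-(Complex.I * t) • H)))
        - (∫ t : ℝ, W t • (NormedSpace.exp ((Complex.I * t) • H) * A *
              NormedSpace.exp (-(Complex.I * t) • H))) * H) := by
  have hE : CompleteOrthogonalIdempotents E := ⟨⟨hEproj, fun i j hij => hEorth i j hij⟩, hEsum⟩
  subst hH hP
  have hevol : ∀ t : ℝ,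
      NormedSpace.exp ((I * t) • ∑ i, (lam i : ℂ) • E i) * A
          * NormedSpace.exp (-(I * t) • ∑ i, (lam i : ℂ) • E i)
        = ∑ p : Fin k × Fin k, Complex.exp (I * t * ↑(lam p.1 - lam p.2)) • (E p.1 * A * E p.2) := by
    intro t
    rw [hE.exp_smul_mul_mul_exp_neg_smul]
    push_cast
    rfl
  simp_rw [hevol, integral_smul_sum_exp_smul hWint, hE.commutator_sum_smul_blocks,
    Finset.smul_sum, smul_smul]
  conv_lhs => rw [← hE.sum_blocks A]
  refine Finset.sum_congr rfl fun p _ => ?_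
  by_cases hp : p.1 ∈ S ↔ p.2 ∈ S
  · rw [hE.block_eq_zero_of_mem_iff_mem hA hp, smul_zero]
  · have hgap' : γ ≤ |-(lam p.1 - lam p.2)| := by
      rw [abs_neg]
      by_cases h1 : p.1 ∈ S
      · exact hgap _ h1 _ (fun h2 => hp (iff_of_true h1 h2))
      · rw [abs_sub_comm]
        exact hgap _ (not_not.mp fun h2 => hp (iff_of_false h1 h2)) _ h1
    have hr : lam p.1 - lam p.2 ≠ 0 := fun h => by simp [h] at hgap'; linarith
    rw [← Complex.ofReal_sub, integral_mul_exp_I_mul_mul_eq_I hr (hW _ hgap'), neg_mul, I_mul_I,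
      neg_neg, one_smul]

/-- off-diagonal inversion `A = -i [H, I(A)]` for a gapped self-adjoint `H`. -/
theorem offdiagonal_inversion (n k : ℕ)
    (H P A : EuclideanSpace ℂ (Fin n) →L[ℂ] EuclideanSpace ℂ (Fin n))
    (γ : ℝ) (hγ : 0 < γ)
    (lam : Fin k → ℝ)
    (E : Fin k → (EuclideanSpace ℂ (Fin n) →L[ℂ] EuclideanSpace ℂ (Fin n)))
    (hEproj : ∀ i, E i * E i = E i) (hEsa : ∀ i, star (E i) = E i)
    (hEorth : ∀ i j, i ≠ j → E i * E j = 0)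
    (hEsum : ∑ i, E i = 1)
    (hH : H = ∑ i, (lam i : ℂ) • E i)
    (S : Finset (Fin k)) (hP : P = ∑ i ∈ S, E i)
    (hgap : ∀ i ∈ S, ∀ j ∉ S, γ ≤ |lam i - lam j|)
    (W : ℝ → ℂ) (hWint : Integrable W)
    (hW : ∀ ξ : ℝ, γ ≤ |ξ| →
      (1 / (Real.sqrt (2 * Real.pi) : ℂ)) *
          (∫ t : ℝ, Complex.exp (-(Complex.I * ξ * t)) * W t)
        = -Complex.I / ((Real.sqrt (2 * Real.pi) : ℂ) * ξ))
    (hA : A = P * A * (1 - P) + (1 - P) * A * P) :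
    A = -Complex.I •
      (H * (∫ t : ℝ, W t • (NormedSpace.exp ((Complex.I * t) • H) * A *
              NormedSpace.exp (-(Complex.I * t) • H)))
        - (∫ t : ℝ, W t • (NormedSpace.exp ((Complex.I * t) • H) * A *
              NormedSpace.exp (-(Complex.I * t) • H))) * H) :=
  offdiagonal_inversion_general n k H P A γ hγ lam E hEproj hEorth hEsum hH S hP hgap W hWint hW hA
end

section
/- Under the gap assumption, for any operator L on the finite-dimensional Hilbert space, [L, P] - i [[I(L), H], P] = 0, where P is the spectral projection onto the gapped patch and I is the weighted time-average map I(A) = ∫ W(t) e^{itH} A e^{-itH} dt. -/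
/-!
Cut every operator into blocks `E a * X * E b` along the spectral projections of
`H = ∑ λᵢ Eᵢ`. On the block `(a, b)` conjugation by `e^{itH}` is the phase
`e^{it(λ_a - λ_b)}`, so the time average `I` acts as multiplication by `c = ∫ e^{-iξt} W(t) dt` with
`ξ = λ_b - λ_a`, commutation with `H` as multiplication by `ξ`, and commutation with `P` as
multiplication by `χ_S(b) - χ_S(a)`. The block of `[L, P] - i[[I(L), H], P]` is therefore
`(χ_S(b) - χ_S(a)) (1 - i ξ c)` times that of `L`: diagonal blocks vanish by the first factor,
and off-diagonal ones by the second, since the gap gives `|ξ| ≥ γ` and hence `ξ c = -i`.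
-/

open MeasureTheory Complex

lemma mul_commutator_mul {R A : Type*} [CommRing R] [Ring A] [Algebra R A] {e f y : A} {μ ν : R}
    (he : e * y = μ • e) (hf : y * f = ν • f) (x : A) :
    e * (x * y - y * x) * f = (ν - μ) • (e * x * f) := by
  calc e * (x * y - y * x) * f = e * x * (y * f) - (e * y) * x * f := by noncomm_ring
    _ = (ν - μ) • (e * x * f) := by
      rw [hf, he, sub_smul, mul_smul_comm, smul_mul_assoc, smul_mul_assoc]

lemma integrable_cexp_mul {W : ℝ → ℂ} (hW : Integrable W) (ξ : ℝ) :
    Integrable fun t : ℝ ↦ cexp (-(I * ξ * t)) * W t := by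
  refine hW.bdd_mul (c := 1) (by fun_prop) (Filter.Eventually.of_forall fun t ↦ ?_)
  rw [Complex.norm_exp]
  simp

namespace CompleteOrthogonalIdempotents

section Algebra

variable {ι R A : Type*} [Fintype ι] [CommSemiring R] [Semiring A] [Algebra R A] {e : ι → A}

def sumSMulAlgHom (he : CompleteOrthogonalIdempotents e) : (ι → R) →ₐ[R] A where
  toFun f := ∑ i, f i • e i
  map_one' := by simp [he.complete]
  map_mul' f g := by
    classical
    simp [Finset.sum_mul, Finset.mul_sum, he.mul_eq, mul_comm, smul_smul]
  map_zero' := by simp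
  map_add' f g := by simp [add_smul, Finset.sum_add_distrib]
  commutes' r := by simp [Algebra.algebraMap_eq_smul_one, ← Finset.smul_sum, he.complete]

lemma sumSMulAlgHom_apply (he : CompleteOrthogonalIdempotents e) (f : ι → R) :
    he.sumSMulAlgHom f = ∑ i, f i • e i := rfl

lemma mul_sumSMulAlgHom (he : CompleteOrthogonalIdempotents e) (f : ι → R) (a : ι) :
    e a * he.sumSMulAlgHom f = f a • e a := by
  classical
  simp [sumSMulAlgHom_apply, Finset.mul_sum, he.mul_eq]

lemma sumSMulAlgHom_mul (he : CompleteOrthogonalIdempotents e) (f : ι → R) (b : ι) :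
    he.sumSMulAlgHom f * e b = f b • e b := by
  classical
  simp [sumSMulAlgHom_apply, Finset.sum_mul, he.mul_eq]

lemma sum_sum_mul_mul (he : CompleteOrthogonalIdempotents e) (x : A) :
    ∑ a, ∑ b, e a * x * e b = x := by
  simp [← Finset.sum_mul, ← Finset.mul_sum, he.complete]

lemma eq_zero_of_forall_mul_mul_eq_zero (he : CompleteOrthogonalIdempotents e) {x : A}
    (h : ∀ a b, e a * x * e b = 0) : x = 0 := by
  rw [← he.sum_sum_mul_mul x]
  simp [h]

end Algebra

section Normed

variable {ι 𝔸 : Type*} [Fintype ι] [NormedRing 𝔸] [NormedAlgebra ℂ 𝔸] {e : ι → 𝔸}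

lemma exp_sumSMulAlgHom (he : CompleteOrthogonalIdempotents e) (f : ι → ℂ) :
    NormedSpace.exp (he.sumSMulAlgHom f) = he.sumSMulAlgHom fun i ↦ cexp (f i) := by
  have hcont : Continuous (he.sumSMulAlgHom (R := ℂ)) :=
    continuous_finsetSum _ fun i _ ↦ (continuous_apply i).smul continuous_const
  have hball : f ∈ Metric.eball 0 (NormedSpace.expSeries ℂ (ι → ℂ)).radius := by
    simp [NormedSpace.expSeries_radius_eq_top]
  rw [← NormedSpace.map_exp_of_mem_ball he.sumSMulAlgHom hcont f hball, Pi.exp_def,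
    Complex.exp_eq_exp_ℂ]

lemma mul_exp_mul_exp_neg_mul (he : CompleteOrthogonalIdempotents e) (lam : ι → ℂ) (z : ℂ)
    (x : 𝔸) (a b : ι) :
    e a * (NormedSpace.exp (z • he.sumSMulAlgHom lam) * x *
        NormedSpace.exp (-z • he.sumSMulAlgHom lam)) * e b =
      cexp (z * (lam a - lam b)) • (e a * x * e b) := by
  simp only [← map_smul, exp_sumSMulAlgHom, ← mul_assoc, he.mul_sumSMulAlgHom]
  rw [mul_assoc, he.sumSMulAlgHom_mul, smul_mul_assoc, mul_smul_comm, smul_mul_assoc, smul_smul,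
    ← Complex.exp_add]
  congr 2
  simp only [Pi.smul_apply, smul_eq_mul]
  ring

end Normed

end CompleteOrthogonalIdempotents

section TimeAverage

variable {𝔸 : Type*} [NormedRing 𝔸] [NormedAlgebra ℂ 𝔸] [CompleteSpace 𝔸]

noncomputable def timeAverage (W : ℝ → ℂ) (H A : 𝔸) : 𝔸 :=
  ∫ t : ℝ, W t • (NormedSpace.exp ((I * t) • H) * A * NormedSpace.exp (-(I * t) • H))

variable {ι : Type*} [Fintype ι] {e : ι → 𝔸}

lemma CompleteOrthogonalIdempotents.mul_timeAverage_mul (he : CompleteOrthogonalIdempotents e)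
    {W : ℝ → ℂ} (hW : Integrable W) (lam : ι → ℝ) (A : 𝔸) (a b : ι) :
    e a * timeAverage W (he.sumSMulAlgHom fun i ↦ (lam i : ℂ)) A * e b =
      (∫ t : ℝ, cexp (-(I * ↑(lam b - lam a) * t)) * W t) • (e a * A * e b) := by
  set H := he.sumSMulAlgHom fun i ↦ (lam i : ℂ)
  set f := fun t : ℝ ↦
    W t • (NormedSpace.exp ((I * t) • H) * A * NormedSpace.exp (-(I * t) • H))
  have hblock : ∀ t : ℝ, ∀ a b, e a * f t * e b =
      (cexp (-(I * ↑(lam b - lam a) * t)) * W t) • (e a * A * e b) := by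
    intro t a b
    rw [mul_smul_comm, smul_mul_assoc, he.mul_exp_mul_exp_neg_mul, smul_smul, mul_comm]
    congr 3
    push_cast
    ring
  -- each block of `f` is an integrable scalar function times a constant
  have hint : Integrable f := by
    have hf : f = fun t : ℝ ↦
        ∑ a, ∑ b, (cexp (-(I * ↑(lam b - lam a) * t)) * W t) • (e a * A * e b) :=
      funext fun t ↦ by simp only [← hblock, he.sum_sum_mul_mul]
    rw [hf]
    exact integrable_finsetSum _ fun a _ ↦ integrable_finsetSum _ fun b _ ↦
      (integrable_cexp_mul hW _).smul_const _
  let Φ : 𝔸 →L[ℂ] 𝔸 := (ContinuousLinearMap.mul ℂ 𝔸 (e a)).comp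
    ((ContinuousLinearMap.mul ℂ 𝔸).flip (e b))
  calc e a * timeAverage W H A * e b = Φ (∫ t, f t) := mul_assoc _ _ _
    _ = ∫ t, e a * f t * e b := by
      rw [← Φ.integral_comp_comm hint]
      simp [Φ, mul_assoc]
    _ = _ := by
      simp only [hblock]
      exact integral_smul_const _ _

theorem CompleteOrthogonalIdempotents.commutator_sub_I_smul_commutator_timeAverage_eq_zero
    (he : CompleteOrthogonalIdempotents e) {lam : ι → ℝ} {S : Finset ι} {γ : ℝ}
    (hγ : 0 < γ) (hgap : ∀ i ∈ S, ∀ j ∉ S, γ ≤ |lam i - lam j|) {W : ℝ → ℂ} (hW : Integrable W)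
    (hŴ : ∀ ξ : ℝ, γ ≤ |ξ| → (∫ t : ℝ, cexp (-(I * ξ * t)) * W t) = -I / ξ)
    {H P : 𝔸} (hH : H = ∑ i, (lam i : ℂ) • e i) (hP : P = ∑ i ∈ S, e i) (L : 𝔸) :
    (L * P - P * L) - I • ((timeAverage W H L * H - H * timeAverage W H L) * P -
      P * (timeAverage W H L * H - H * timeAverage W H L)) = 0 := by
  classical
  set χ : ι → ℂ := fun i ↦ if i ∈ S then 1 else 0
  replace hH : H = he.sumSMulAlgHom fun i ↦ (lam i : ℂ) := hH
  replace hP : P = he.sumSMulAlgHom χ := by simp [hP, χ, sumSMulAlgHom_apply, ite_smul]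
  refine he.eq_zero_of_forall_mul_mul_eq_zero fun a b ↦ ?_
  have hX := he.mul_timeAverage_mul hW lam L a b
  rw [← hH] at hX
  set c := ∫ t : ℝ, cexp (-(I * ↑(lam b - lam a) * t)) * W t
  have hc : (χ b - χ a) * (1 - I * (((lam b : ℂ) - lam a) * c)) = 0 := by
    have hξc : ∀ ξ : ℝ, γ ≤ |ξ| →
        (ξ : ℂ) * (∫ t : ℝ, cexp (-(I * ξ * t)) * W t) = -I := by
      intro ξ hξ
      have hξ0 : ξ ≠ 0 := by
        rintro rfl
        simp only [abs_zero] at hξ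
        linarith
      have : (ξ : ℂ) ≠ 0 := mod_cast hξ0
      rw [hŴ ξ hξ]
      field_simp
    by_cases ha : a ∈ S <;> by_cases hb : b ∈ S
    · simp [χ, ha, hb]
    · rw [← ofReal_sub, hξc _ (abs_sub_comm (lam a) (lam b) ▸ hgap a ha b hb)]
      simp [χ, ha, hb]
    · rw [← ofReal_sub, hξc _ (hgap b hb a ha)]
      simp [χ, ha, hb]
    · simp [χ, ha, hb]
  calc
    _ = (χ b - χ a) • (e a * L * e b) - I • ((χ b - χ a) •
        (((lam b : ℂ) - lam a) • (e a * timeAverage W H L * e b))) := by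
      rw [mul_sub, sub_mul, mul_smul_comm, smul_mul_assoc]
      simp only [hH, hP, mul_commutator_mul (he.mul_sumSMulAlgHom _ a) (he.sumSMulAlgHom_mul _ b)]
    _ = ((χ b - χ a) * (1 - I * (((lam b : ℂ) - lam a) * c))) • (e a * L * e b) := by
      rw [hX]
      module
    _ = 0 := by rw [hc, zero_smul]

end TimeAverage

theorem commutator_inversion_identity_general (n k : ℕ)
    (H P L : EuclideanSpace ℂ (Fin n) →L[ℂ] EuclideanSpace ℂ (Fin n))
    (γ : ℝ) (hγ : 0 < γ)
    (lam : Fin k → ℝ)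
    (E : Fin k → (EuclideanSpace ℂ (Fin n) →L[ℂ] EuclideanSpace ℂ (Fin n)))
    (hEproj : ∀ i, E i * E i = E i)
    (hEorth : ∀ i j, i ≠ j → E i * E j = 0)
    (hEsum : ∑ i, E i = 1)
    (hH : H = ∑ i, (lam i : ℂ) • E i)
    (S : Finset (Fin k)) (hP : P = ∑ i ∈ S, E i)
    (hgap : ∀ i ∈ S, ∀ j ∉ S, γ ≤ |lam i - lam j|)
    (W : ℝ → ℂ) (hWint : Integrable W)
    (hW : ∀ ξ : ℝ, γ ≤ |ξ| →
      (1 / (Real.sqrt (2 * Real.pi) : ℂ)) *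
          (∫ t : ℝ, Complex.exp (-(Complex.I * ξ * t)) * W t)
        = -Complex.I / ((Real.sqrt (2 * Real.pi) : ℂ) * ξ)) :
    let IL := ∫ t : ℝ, W t • (NormedSpace.exp ((Complex.I * t) • H) * L *
                NormedSpace.exp (-(Complex.I * t) • H))
    (L * P - P * L) - Complex.I •
        ((IL * H - H * IL) * P - P * (IL * H - H * IL)) = 0 := by
  have hE : CompleteOrthogonalIdempotents E := ⟨⟨hEproj, hEorth⟩, hEsum⟩
  have hŴ : ∀ ξ : ℝ, γ ≤ |ξ| → (∫ t : ℝ, cexp (-(I * ξ * t)) * W t) = -I / ξ := by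
    intro ξ hξ
    have hsqrt : (Real.sqrt (2 * Real.pi) : ℂ) ≠ 0 := by
      exact_mod_cast (Real.sqrt_pos.mpr Real.two_pi_pos).ne'
    have := hW ξ hξ
    field_simp at this ⊢
    exact this
  exact hE.commutator_sub_I_smul_commutator_timeAverage_eq_zero hγ hgap hWint hŴ hH hP L

/-- `[L,P] - i [[I(L),H],P] = 0` under the gap assumption. -/
theorem commutator_inversion_identity (n k : ℕ)
    (H P L : EuclideanSpace ℂ (Fin n) →L[ℂ] EuclideanSpace ℂ (Fin n))
    (γ : ℝ) (hγ : 0 < γ)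
    (lam : Fin k → ℝ)
    (E : Fin k → (EuclideanSpace ℂ (Fin n) →L[ℂ] EuclideanSpace ℂ (Fin n)))
    (hEproj : ∀ i, E i * E i = E i) (hEsa : ∀ i, star (E i) = E i)
    (hEorth : ∀ i j, i ≠ j → E i * E j = 0)
    (hEsum : ∑ i, E i = 1)
    (hH : H = ∑ i, (lam i : ℂ) • E i)
    (S : Finset (Fin k)) (hP : P = ∑ i ∈ S, E i)
    (hgap : ∀ i ∈ S, ∀ j ∉ S, γ ≤ |lam i - lam j|)
    (W : ℝ → ℂ) (hWint : Integrable W)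
    (hW : ∀ ξ : ℝ, γ ≤ |ξ| →
      (1 / (Real.sqrt (2 * Real.pi) : ℂ)) *
          (∫ t : ℝ, Complex.exp (-(Complex.I * ξ * t)) * W t)
        = -Complex.I / ((Real.sqrt (2 * Real.pi) : ℂ) * ξ)) :
    let IL := ∫ t : ℝ, W t • (NormedSpace.exp ((Complex.I * t) • H) * L *
                NormedSpace.exp (-(Complex.I * t) • H))
    (L * P - P * L) - Complex.I •
        ((IL * H - H * IL) * P - P * (IL * H - H * IL)) = 0 :=
  commutator_inversion_identity_general n k H P L γ hγ lam E hEproj hEorth hEsum hH S hP hgap W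
    hWint hW
end

section
/- Let s ↦ H_s be a C¹ family of self-adjoint operators on a finite-dimensional Hilbert space with a spectral patch separated by a uniform gap γ > 0, and let P_s be the corresponding spectral projection (which is C¹ in s). Then Ṗ_s = i [I_s(Ḣ_s), P_s], where I_s(A) = ∫ W_γ(t) e^{itH_s} A e^{-itH_s} dt with W_γ as in the gap construction. In other words, K_s := I_s(Ḣ_s) generates the spectral flow. -/
open MeasureTheory Complex

/-!
Decompose along the spectral projections `E i` of `H s₀ = ∑ λᵢ • E i`. Differentiating
`P s * P s = P s` and `H s * P s = P s * H s` at `s₀` and sandwiching between `E i` and `E j` shows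
that `E i * P' * E j` vanishes when `i, j` lie on the same side of `S`, and otherwise satisfies
`(λᵢ - λⱼ) • E i * P' * E j = ± E i * H' * E j`. The conjugate `exp (i t H) * H' * exp (-i t H)` has
blocks `exp (i t (λᵢ - λⱼ)) • E i * H' * E j`, so integrating against `W` multiplies each block by a
Fourier coefficient of `W`, which the gap condition evaluates to `i / (λᵢ - λⱼ)` across `S`. With
`χ` the indicator of `S`, the block of `i • (K * P - P * K)` is `i (χⱼ - χᵢ) • E i * K * E j`, and
this matches the block of `P'`.
-/

namespace OrthogonalIdempotents

variable {𝕜 R ι : Type*} [CommSemiring 𝕜] [Ring R] [Algebra 𝕜 R] [Fintype ι] {E : ι → R}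

theorem mul_sum_smul (he : OrthogonalIdempotents E) (c : ι → 𝕜) (i : ι) :
    E i * ∑ j, c j • E j = c i • E i := by
  classical
  simp [Finset.mul_sum, he.mul_eq]

theorem sum_smul_mul (he : OrthogonalIdempotents E) (c : ι → 𝕜) (j : ι) :
    (∑ i, c i • E i) * E j = c j • E j := by
  classical
  simp [Finset.sum_mul, he.mul_eq]

theorem mul_mul_sum_smul_mul (he : OrthogonalIdempotents E) (c : ι → 𝕜) (X : R) (i j : ι) :
    E i * (X * ∑ k, c k • E k) * E j = c j • (E i * X * E j) := by
  rw [mul_assoc, mul_assoc, he.sum_smul_mul, mul_smul_comm, mul_smul_comm, mul_assoc]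

theorem mul_sum_smul_mul_mul (he : OrthogonalIdempotents E) (c : ι → 𝕜) (X : R) (i j : ι) :
    E i * ((∑ k, c k • E k) * X) * E j = c i • (E i * X * E j) := by
  rw [← mul_assoc, he.mul_sum_smul, smul_mul_assoc, smul_mul_assoc]

theorem mul_sum_sum_smul_mul_mul (he : OrthogonalIdempotents E) (c : ι → ι → 𝕜) (X : R)
    (a b : ι) : E a * (∑ i, ∑ j, c i j • (E i * X * E j)) * E b = c a b • (E a * X * E b) := by
  classical
  have hblock : ∀ i j, E a * (E i * X * E j) * E b =
      if a = i ∧ j = b then E a * X * E b else 0 := by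
    intro i j
    rw [show E a * (E i * X * E j) * E b = E a * E i * X * (E j * E b) by noncomm_ring,
      he.mul_eq, he.mul_eq]
    split_ifs <;> simp_all
  simp only [Finset.mul_sum, Finset.sum_mul, mul_smul_comm, smul_mul_assoc, hblock]
  simp [ite_and, Finset.sum_ite_eq, Finset.sum_ite_eq']

end OrthogonalIdempotents

namespace CompleteOrthogonalIdempotents

variable {R ι : Type*} [Ring R] [Fintype ι] {E : ι → R}

theorem sum_sum_mul_mul_s2 (he : CompleteOrthogonalIdempotents E) (X : R) :
    ∑ i, ∑ j, E i * X * E j = X := by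
  simp only [← Finset.sum_mul, ← Finset.mul_sum, he.complete, one_mul, mul_one]

theorem ext_mul_mul (he : CompleteOrthogonalIdempotents E) {X Y : R}
    (h : ∀ i j, E i * X * E j = E i * Y * E j) : X = Y := by
  rw [← he.sum_sum_mul_mul_s2 X, ← he.sum_sum_mul_mul_s2 Y]
  simp only [h]

end CompleteOrthogonalIdempotents

section Commutator

variable {R ι : Type*} [Ring R] [Algebra ℂ R] [Fintype ι] {E : ι → R}

theorem CompleteOrthogonalIdempotents.eq_I_smul_commutator
    (he : CompleteOrthogonalIdempotents E) {lam : ι → ℂ} {S : Finset ι} {H P H' P' K : R}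
    (hH : H = ∑ i, lam i • E i) (hP : P = ∑ i ∈ S, E i)
    (hP' : P' * P + P * P' = P') (hHP' : H' * P + H * P' = P' * H + P * H')
    (hgap : ∀ i j, Xor (i ∈ S) (j ∈ S) → lam i ≠ lam j)
    (hK : ∀ i j, Xor (i ∈ S) (j ∈ S) →
      E i * K * E j = (I / (lam i - lam j)) • (E i * H' * E j)) :
    P' = I • (K * P - P * K) := by
  classical
  have hPdiag : ∑ i ∈ S, E i = ∑ i, (if i ∈ S then 1 else 0 : ℂ) • E i := by
    simp [ite_smul, Finset.sum_ite_mem]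
  subst hH hP
  rw [hPdiag] at hP' hHP' ⊢
  refine he.ext_mul_mul fun i j => ?_
  have hp := congrArg (E i * · * E j) hP'
  have hh := congrArg (E i * · * E j) hHP'
  simp only [mul_add, add_mul, he.mul_mul_sum_smul_mul, he.mul_sum_smul_mul_mul] at hp hh
  rw [mul_smul_comm, smul_mul_assoc, mul_sub, sub_mul, he.mul_mul_sum_smul_mul,
    he.mul_sum_smul_mul_mul]
  by_cases hij : Xor (i ∈ S) (j ∈ S)
  swap
  · rw [xor_iff_not_iff, not_not] at hij
    by_cases hi : i ∈ S
    · simpa [hi, hij.mp hi] using hp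
    · simpa [hi, mt hij.mpr hi] using hp.symm
  have hd : lam i - lam j ≠ 0 := sub_ne_zero.mpr (hgap i j hij)
  have hII : (lam i - lam j) * (I * (I / (lam i - lam j))) = -1 := by
    field_simp; exact I_sq
  rw [hK i j hij]
  apply smul_right_injective R hd
  rcases hij with ⟨hi, hj⟩ | ⟨hj, hi⟩
  all_goals
    simp only [hi, hj, if_true, if_false, one_smul, zero_smul, zero_add, add_zero] at hh ⊢
    simp only [smul_sub, smul_smul, hII]
    linear_combination (norm := module) hh

end Commutator

section Derivative

variable {𝔸 : Type*} [NormedRing 𝔸] [NormedAlgebra ℝ 𝔸] {f g : ℝ → 𝔸} {f' g' : 𝔸} {x : ℝ}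

theorem HasDerivAt.mul_add_mul_eq_of_idempotent (hf : HasDerivAt f f' x)
    (hidem : ∀ s, f s * f s = f s) : f' * f x + f x * f' = f' := by
  have h := hf.mul hf
  rw [show f * f = f from funext hidem] at h
  exact h.unique hf

theorem HasDerivAt.mul_add_mul_eq_of_commute (hf : HasDerivAt f f' x) (hg : HasDerivAt g g' x)
    (hcomm : ∀ s, f s * g s = g s * f s) : f' * g x + f x * g' = g' * f x + g x * f' := by
  have h := hf.mul hg
  rw [show f * g = g * f from funext hcomm] at h
  exact h.unique (hg.mul hf)

end Derivative

theorem MeasureTheory.Integrable.exp_neg_I_mul_mul {W : ℝ → ℂ} (hW : Integrable W) (ξ : ℝ) :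
    Integrable fun t : ℝ => cexp (-(I * ξ * t)) * W t := by
  refine hW.bdd_mul (c := 1) (by fun_prop) (ae_of_all _ fun t => le_of_eq ?_)
  rw [show -(I * ξ * t) = ((-(ξ * t) : ℝ) : ℂ) * I by push_cast; ring]
  exact Complex.norm_exp_ofReal_mul_I _

section Exponential

variable {𝔸 : Type*} [NormedRing 𝔸] [NormedAlgebra ℂ 𝔸] [CompleteSpace 𝔸]

theorem NormedSpace.exp_mul_of_mul_eq_smul {A B : 𝔸} {c : ℂ} (h : A * B = c • B) :
    NormedSpace.exp A * B = cexp c • B := by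
  have hpow : ∀ m : ℕ, A ^ m * B = c ^ m • B := by
    intro m
    induction m with
    | zero => simp
    | succ m ih => rw [pow_succ', mul_assoc, ih, mul_smul_comm, h, smul_smul, ← pow_succ]
  have hA := (NormedSpace.exp_series_hasSum_exp' (𝕂 := ℂ) A).mul_right B
  simp only [smul_mul_assoc, hpow, smul_smul] at hA
  rw [Complex.exp_eq_exp_ℂ]
  exact hA.unique ((NormedSpace.exp_series_hasSum_exp' (𝕂 := ℂ) c).smul_const B)

variable {ι : Type*} [Fintype ι] {E : ι → 𝔸}

theorem CompleteOrthogonalIdempotents.exp_smul_sum_smul (he : CompleteOrthogonalIdempotents E)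
    (lam : ι → ℂ) (z : ℂ) :
    NormedSpace.exp (z • ∑ i, lam i • E i) = ∑ i, cexp (z * lam i) • E i := by
  have hcol : ∀ i, (z • ∑ j, lam j • E j) * E i = (z * lam i) • E i := fun i => by
    rw [smul_mul_assoc, he.sum_smul_mul, smul_smul]
  rw [← mul_one (NormedSpace.exp _), ← he.complete, Finset.mul_sum]
  exact Finset.sum_congr rfl fun i _ => NormedSpace.exp_mul_of_mul_eq_smul (hcol i)

theorem CompleteOrthogonalIdempotents.exp_smul_mul_mul_exp_neg_smul_s2
    (he : CompleteOrthogonalIdempotents E) (lam : ι → ℂ) (z : ℂ) (X : 𝔸) :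
    NormedSpace.exp (z • ∑ i, lam i • E i) * X * NormedSpace.exp (-z • ∑ i, lam i • E i) =
      ∑ i, ∑ j, cexp (z * (lam i - lam j)) • (E i * X * E j) := by
  rw [he.exp_smul_sum_smul, he.exp_smul_sum_smul, Finset.sum_mul, Finset.sum_mul]
  refine Finset.sum_congr rfl fun i _ => ?_
  rw [Finset.mul_sum]
  refine Finset.sum_congr rfl fun j _ => ?_
  rw [smul_mul_assoc, smul_mul_assoc, mul_smul_comm, smul_smul, ← Complex.exp_add]
  ring_nf

theorem CompleteOrthogonalIdempotents.integral_smul_conj_exp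
    (he : CompleteOrthogonalIdempotents E) (lam : ι → ℝ) {W : ℝ → ℂ} (hW : Integrable W)
    (X : 𝔸) :
    ∫ t : ℝ, W t • (NormedSpace.exp ((I * t) • ∑ i, (lam i : ℂ) • E i) * X *
        NormedSpace.exp (-(I * t) • ∑ i, (lam i : ℂ) • E i)) =
      ∑ i, ∑ j, (∫ t : ℝ, cexp (-(I * ((lam j - lam i : ℝ) : ℂ) * t)) * W t) •
        (E i * X * E j) := by
  have hphase : ∀ (i j : ι) (t : ℝ), W t * cexp (I * t * (lam i - lam j)) =
      cexp (-(I * ((lam j - lam i : ℝ) : ℂ) * t)) * W t := fun i j t => by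
    rw [mul_comm]; push_cast; ring_nf
  simp_rw [he.exp_smul_mul_mul_exp_neg_smul_s2]
  simp only [Finset.smul_sum, smul_smul, hphase]
  rw [integral_finsetSum _ fun i _ => integrable_finsetSum _ fun j _ =>
    (hW.exp_neg_I_mul_mul _).smul_const _]
  refine Finset.sum_congr rfl fun i _ => ?_
  rw [integral_finsetSum _ fun j _ => (hW.exp_neg_I_mul_mul _).smul_const _]
  exact Finset.sum_congr rfl fun j _ => integral_smul_const _ _

end Exponential

theorem le_abs_sub_of_xor {ι : Type*} {S : Finset ι} {lam : ι → ℝ} {γ : ℝ}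
    (hgap : ∀ i ∈ S, ∀ j ∉ S, γ ≤ |lam i - lam j|) {i j : ι} (hij : Xor (i ∈ S) (j ∈ S)) :
    γ ≤ |lam j - lam i| := by
  rcases hij with ⟨hi, hj⟩ | ⟨hj, hi⟩
  · rw [abs_sub_comm]; exact hgap i hi j hj
  · exact hgap j hj i hi

theorem spectral_flow_generator_general (n k : ℕ)
    (H P : ℝ → (EuclideanSpace ℂ (Fin n) →L[ℂ] EuclideanSpace ℂ (Fin n)))
    (H' P' : EuclideanSpace ℂ (Fin n) →L[ℂ] EuclideanSpace ℂ (Fin n))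
    (s₀ : ℝ) (γ : ℝ) (hγ : 0 < γ)
    (hPproj : ∀ s, P s * P s = P s)
    (hcomm : ∀ s, H s * P s = P s * H s)
    (hHd : HasDerivAt H H' s₀) (hPd : HasDerivAt P P' s₀)
    (lam : Fin k → ℝ)
    (E : Fin k → (EuclideanSpace ℂ (Fin n) →L[ℂ] EuclideanSpace ℂ (Fin n)))
    (hEproj : ∀ i, E i * E i = E i)
    (hEorth : ∀ i j, i ≠ j → E i * E j = 0)
    (hEsum : ∑ i, E i = 1)
    (hHs₀ : H s₀ = ∑ i, (lam i : ℂ) • E i)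
    (S : Finset (Fin k)) (hPs₀ : P s₀ = ∑ i ∈ S, E i)
    (hgap : ∀ i ∈ S, ∀ j ∉ S, γ ≤ |lam i - lam j|)
    (W : ℝ → ℂ) (hWint : Integrable W)
    (hW : ∀ ξ : ℝ, γ ≤ |ξ| →
      (1 / (Real.sqrt (2 * Real.pi) : ℂ)) *
          (∫ t : ℝ, Complex.exp (-(Complex.I * ξ * t)) * W t)
        = -Complex.I / ((Real.sqrt (2 * Real.pi) : ℂ) * ξ)) :
    let K := ∫ t : ℝ, W t • (NormedSpace.exp ((Complex.I * t) • H s₀) * H' *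
                NormedSpace.exp (-(Complex.I * t) • H s₀))
    P' = Complex.I • (K * P s₀ - P s₀ * K) := by
  intro K
  have he : CompleteOrthogonalIdempotents E := ⟨⟨hEproj, hEorth⟩, hEsum⟩
  have hne : ∀ i j, Xor (i ∈ S) (j ∈ S) → lam j - lam i ≠ 0 := fun i j hij =>
    abs_pos.mp (hγ.trans_le (le_abs_sub_of_xor hgap hij))
  have hcoef : ∀ i j, Xor (i ∈ S) (j ∈ S) →
      ∫ t : ℝ, cexp (-(I * ((lam j - lam i : ℝ) : ℂ) * t)) * W t = I / (lam i - lam j : ℂ) := by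
    intro i j hij
    have hξ : ((lam j - lam i : ℝ) : ℂ) ≠ 0 := by exact_mod_cast hne i j hij
    have h := hW _ (le_abs_sub_of_xor hgap hij)
    field_simp at h
    set c := ∫ t : ℝ, cexp (-(I * ((lam j - lam i : ℝ) : ℂ) * t)) * W t
    push_cast at h hξ
    rw [eq_div_iff (sub_ne_zero.mpr (sub_ne_zero.mp hξ).symm)]
    linear_combination -h
  have hK : K = ∑ i, ∑ j, (∫ t : ℝ, cexp (-(I * ((lam j - lam i : ℝ) : ℂ) * t)) * W t) •
      (E i * H' * E j) := by
    simp only [K, hHs₀]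
    exact he.integral_smul_conj_exp lam hWint H'
  refine he.eq_I_smul_commutator hHs₀ hPs₀ (hPd.mul_add_mul_eq_of_idempotent hPproj)
    (hHd.mul_add_mul_eq_of_commute hPd hcomm)
    (fun i j hij => by exact_mod_cast (sub_ne_zero.mp (hne i j hij)).symm) fun i j hij => ?_
  rw [hK, he.mul_sum_sum_smul_mul_mul, hcoef i j hij]

/-- the generator of the spectral flow: `Ṗ = i [I(Ḣ), P]`. -/
theorem spectral_flow_generator (n k : ℕ)
    (H P : ℝ → (EuclideanSpace ℂ (Fin n) →L[ℂ] EuclideanSpace ℂ (Fin n)))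
    (H' P' : EuclideanSpace ℂ (Fin n) →L[ℂ] EuclideanSpace ℂ (Fin n))
    (s₀ : ℝ) (γ : ℝ) (hγ : 0 < γ)
    (hHsa : ∀ s, star (H s) = H s)
    (hPproj : ∀ s, P s * P s = P s) (hPsa : ∀ s, star (P s) = P s)
    (hcomm : ∀ s, H s * P s = P s * H s)
    (hHd : HasDerivAt H H' s₀) (hPd : HasDerivAt P P' s₀)
    (lam : Fin k → ℝ)
    (E : Fin k → (EuclideanSpace ℂ (Fin n) →L[ℂ] EuclideanSpace ℂ (Fin n)))
    (hEproj : ∀ i, E i * E i = E i) (hEsa : ∀ i, star (E i) = E i)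
    (hEorth : ∀ i j, i ≠ j → E i * E j = 0)
    (hEsum : ∑ i, E i = 1)
    (hHs₀ : H s₀ = ∑ i, (lam i : ℂ) • E i)
    (S : Finset (Fin k)) (hPs₀ : P s₀ = ∑ i ∈ S, E i)
    (hgap : ∀ i ∈ S, ∀ j ∉ S, γ ≤ |lam i - lam j|)
    (W : ℝ → ℂ) (hWint : Integrable W)
    (hW : ∀ ξ : ℝ, γ ≤ |ξ| →
      (1 / (Real.sqrt (2 * Real.pi) : ℂ)) *
          (∫ t : ℝ, Complex.exp (-(Complex.I * ξ * t)) * W t)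
        = -Complex.I / ((Real.sqrt (2 * Real.pi) : ℂ) * ξ)) :
    let K := ∫ t : ℝ, W t • (NormedSpace.exp ((Complex.I * t) • H s₀) * H' *
                NormedSpace.exp (-(Complex.I * t) • H s₀))
    P' = Complex.I • (K * P s₀ - P s₀ * K) :=
  spectral_flow_generator_general n k H P H' P' s₀ γ hγ hPproj hcomm hHd hPd lam E hEproj hEorth
    hEsum hHs₀ S hPs₀ hgap W hWint hW
end

section
/- Let f : ℝ≥0 → ℝ be nondecreasing with f(0) > 0 and suppose f(x) - m·log(x) → +∞ as x → ∞ for every m > 0. Then the subadditive minorant f̂(x) = inf{∑ f(x_i) : ∑ x_i = x, x_i > 0} also satisfies f̂(x) - m·log(x) → +∞ as x → ∞ for every m > 0. -/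
open Filter Topology

/-!
Any `g` with `g 0 ≤ 0` that is subadditive on `[0, ∞)` and lies below `f` also lies below `f̂`.
Given `m > 0`, put `M = m + 1`; since `f` eventually exceeds `M log (2x)` and is at least
`f 0 > 0` everywhere, `g x = M log (1 + k x)` lies below `f` for small enough `k > 0`, and
`(1 + k a)(1 + k b) ≥ 1 + k (a + b)` makes it subadditive. Finally `g x - m log x` grows like
`log x`.
-/

/-- The subadditive minorant `f̂(x) = inf {∑ f(xᵢ) : xᵢ > 0, ∑ xᵢ = x}`. -/
noncomputable def subadditiveMinorant (f : ℝ → ℝ) (x : ℝ) : ℝ :=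
  sInf {y | ∃ l : List ℝ, (∀ z ∈ l, 0 < z) ∧ l.sum = x ∧ (l.map f).sum = y}

open Real

section Minorant

variable {f g : ℝ → ℝ}

theorem apply_list_sum_le_sum_map (hsub : ∀ a b, 0 ≤ a → 0 ≤ b → g (a + b) ≤ g a + g b)
    (h0 : g 0 ≤ 0) (hle : ∀ x, 0 < x → g x ≤ f x) :
    ∀ l : List ℝ, (∀ z ∈ l, 0 < z) → g l.sum ≤ (l.map f).sum
  | [], _ => by simpa using h0
  | a :: t, hpos => by
    have ha : 0 < a := hpos a List.mem_cons_self
    have ht : ∀ z ∈ t, 0 < z := fun z hz => hpos z (List.mem_cons_of_mem a hz)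
    have htsum : 0 ≤ t.sum := List.sum_nonneg fun z hz => (ht z hz).le
    simp only [List.sum_cons, List.map_cons]
    linarith [hsub a t.sum ha.le htsum, hle a ha, apply_list_sum_le_sum_map hsub h0 hle t ht]

theorem le_subadditiveMinorant (hsub : ∀ a b, 0 ≤ a → 0 ≤ b → g (a + b) ≤ g a + g b)
    (h0 : g 0 ≤ 0) (hle : ∀ x, 0 < x → g x ≤ f x) {x : ℝ} (hx : 0 < x) :
    g x ≤ subadditiveMinorant f x := by
  refine le_csInf ⟨f x, [x], by simp [hx]⟩ ?_
  rintro _ ⟨l, hl, rfl, rfl⟩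
  exact apply_list_sum_le_sum_map hsub h0 hle l hl

end Minorant

theorem log_one_add_mul_add_le {k a b : ℝ} (hk : 0 ≤ k) (ha : 0 ≤ a) (hb : 0 ≤ b) :
    log (1 + k * (a + b)) ≤ log (1 + k * a) + log (1 + k * b) := by
  have hka : 0 < 1 + k * a := by positivity
  have hkb : 0 < 1 + k * b := by positivity
  rw [← log_mul hka.ne' hkb.ne']
  exact log_le_log (by positivity) (by nlinarith [mul_nonneg (mul_nonneg hk hk) (mul_nonneg ha hb)])

theorem exists_mul_log_one_add_mul_le {f : ℝ → ℝ} (hf : ∀ x, 0 ≤ x → f 0 ≤ f x)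
    (hf0 : 0 < f 0) {M : ℝ} (hM : 0 < M)
    (hgrow : Tendsto (fun x => f x - M * log x) atTop atTop) :
    ∃ k > 0, ∀ x, 0 ≤ x → M * log (1 + k * x) ≤ f x := by
  obtain ⟨y₀, hy₀⟩ := eventually_atTop.mp (hgrow.eventually_ge_atTop (M * log 2))
  set y := max y₀ 1
  have hy : 0 < y := one_pos.trans_le (le_max_right _ _)
  set k := min 1 (f 0 / (M * y))
  have hk : 0 < k := lt_min one_pos (by positivity)
  refine ⟨k, hk, fun x hx => ?_⟩
  rcases le_or_gt x y with hxy | hyx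
  · have hky : M * (k * y) ≤ f 0 := by
      calc M * (k * y) ≤ M * (f 0 / (M * y) * y) := by gcongr; exact min_le_right _ _
        _ = f 0 := by field_simp
    calc M * log (1 + k * x) ≤ M * (k * x) := by
          gcongr; linarith [log_le_sub_one_of_pos (show 0 < 1 + k * x by positivity)]
      _ ≤ M * (k * y) := by gcongr
      _ ≤ f x := hky.trans (hf x hx)
  · have hx1 : 1 ≤ x := (le_max_right _ _).trans hyx.le
    have hfx := hy₀ x ((le_max_left _ _).trans hyx.le)
    calc M * log (1 + k * x) ≤ M * log (2 * x) := by
          gcongr; nlinarith [min_le_left 1 (f 0 / (M * y))]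
      _ = M * log 2 + M * log x := by rw [log_mul two_ne_zero (by positivity)]; ring
      _ ≤ f x := by linarith

theorem tendsto_mul_log_one_add_mul_sub_mul_log {k : ℝ} (hk : 0 < k) {m : ℝ} (hm : 0 ≤ m) :
    Tendsto (fun x => (m + 1) * log (1 + k * x) - m * log x) atTop atTop := by
  refine tendsto_atTop_mono' atTop ?_
    (tendsto_atTop_add_const_right atTop ((m + 1) * log k) tendsto_log_atTop)
  filter_upwards [eventually_gt_atTop 0] with x hx
  have hlog : log k + log x ≤ log (1 + k * x) := by
    rw [← log_mul hk.ne' hx.ne']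
    exact log_le_log (by positivity) (by linarith)
  nlinarith [mul_le_mul_of_nonneg_left hlog (by linarith : (0 : ℝ) ≤ m + 1)]

/-- if `f(x) - m log x → ∞` for every `m > 0`, then the same holds for `f̂`. -/
theorem subadditiveMinorant_log_growth (f : ℝ → ℝ)
    (hmono : ∀ x y, 0 ≤ x → x ≤ y → f x ≤ f y) (hf0 : 0 < f 0)
    (hgrow : ∀ m : ℝ, 0 < m → Tendsto (fun x => f x - m * Real.log x) atTop atTop) :
    ∀ m : ℝ, 0 < m →
      Tendsto (fun x => subadditiveMinorant f x - m * Real.log x) atTop atTop := by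
  intro m hm
  have hM : 0 < m + 1 := by linarith
  obtain ⟨k, hk, hle⟩ := exists_mul_log_one_add_mul_le (fun x => hmono 0 x le_rfl) hf0 hM (hgrow _ hM)
  have hsub : ∀ a b : ℝ, 0 ≤ a → 0 ≤ b →
      (m + 1) * log (1 + k * (a + b)) ≤ (m + 1) * log (1 + k * a) + (m + 1) * log (1 + k * b) :=
    fun a b ha hb => by rw [← mul_add]; gcongr; exact log_one_add_mul_add_le hk.le ha hb
  refine tendsto_atTop_mono' atTop ?_ (tendsto_mul_log_one_add_mul_sub_mul_log hk hm.le)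
  filter_upwards [eventually_gt_atTop 0] with x hx
  have hminorant := le_subadditiveMinorant (g := fun x => (m + 1) * log (1 + k * x)) hsub (by simp)
    (fun x hx => hle x hx.le) hx
  linarith
end
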